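/- Let e = (e^I_μ) be a real 4×4 matrix and s ∈ {+1,−1}. (a) If B^{IJ}_{μν} := s (e^I_μ e^J_ν − e^I_ν e^J_μ) (topological sector) or B^{IJ}_{μν} := (s/2) Σ_{K,L} ε^{IJKL} (e^K_μ e^L_ν − e^K_ν e^L_μ) (gravitational sector), then ≺B_{μν}, B_{ρσ}≻ = 2 (det e) ε_{μνρσ} for all μ,ν,ρ,σ; hence B satisfies the simplicity constraints ≺B_{μν}, B_{ρσ}≻ = (𝒱/24) ε_{μνρσ} with 𝒱 = 48 det e, and 𝒱 ≠ 0 if and only if e is invertible. (b) In both cases also the second form of the simplicity constraints holds: Σ_{μ,ν,ρ,σ} ε^{μνρσ} B^{IJ}_{μν} B^{KL}_{ρσ} = 4 (det e) ε^{IJKL} for all I,J,K,L. -/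

import Mathlib

noncomputable section

/-- The Levi-Civita symbol on `{0,1,2,3}` (indexed by `Fin 4`), with `ε 0 1 2 3 = 1`. -/
def eps4 (i j k l : Fin 4) : ℝ :=
  (((j.val : ℝ) - i.val) * ((k.val : ℝ) - i.val) * ((l.val : ℝ) - i.val) *
    ((k.val : ℝ) - j.val) * ((l.val : ℝ) - j.val) * ((l.val : ℝ) - k.val)) / 12

/-- A B-field `B^{IJ}_{μν}`, written `B I J μ ν`. -/
abbrev BField : Type := Fin 4 → Fin 4 → Fin 4 → Fin 4 → ℝ

/-- The second invariant bilinear form in internal-index form: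
`≺x,y≻ = ½ ∑_{I,J,K,L} ε_{IJKL} x^{IJ} y^{KL}`. -/
def precB (x y : Fin 4 → Fin 4 → ℝ) : ℝ :=
  (1 / 2) * ∑ I : Fin 4, ∑ J : Fin 4, ∑ K : Fin 4, ∑ L : Fin 4, eps4 I J K L * x I J * y K L

/-- The four-dimensional volume `𝒱 = ∑ ε^{μνρσ} ≺B_{μν}, B_{ρσ}≻`. -/
def vol4 (B : BField) : ℝ :=
  ∑ μ : Fin 4, ∑ ν : Fin 4, ∑ ρ : Fin 4, ∑ τ : Fin 4,
    eps4 μ ν ρ τ * precB (fun I J => B I J μ ν) (fun I J => B I J ρ τ)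

/-!
Both sectors are built from the bivectors `e^I_μ e^J_ν - e^I_ν e^J_μ`. Expanding either bilinear
expression, every term is a contraction `∑ ε_{IJKL} e^I_μ e^J_ν e^K_ρ e^L_σ`, which the Leibniz
formula identifies with `det e · ε_{μνρσ}`; this settles the topological sector. The gravitational
B-field is the internal Hodge dual of the topological one. The form `≺·,·≻` is invariant under the
Hodge star, and dualising both internal index pairs of `ε` gives back `4 ε`, so both results carry
over. Finally `∑ ε_{μνρσ}² = 4! = 24` gives `𝒱 = 48 det e`.
-/

open Matrix Equiv

lemma Fintype.sum_fun_fin_four {α M : Type*} [Fintype α] [AddCommMonoid M]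
    (G : α → α → α → α → M) :
    ∑ v : Fin 4 → α, G (v 0) (v 1) (v 2) (v 3) = ∑ a, ∑ b, ∑ c, ∑ d, G a b c d := by
  have hbij : Function.Bijective fun v : Fin 4 → α => (v 0, v 1, v 2, v 3) := by
    refine ⟨fun v w h => ?_, fun p => ⟨![p.1, p.2.1, p.2.2.1, p.2.2.2], rfl⟩⟩
    simp only [Prod.mk.injEq] at h
    ext i; fin_cases i <;> simp [h]
  rw [Fintype.sum_bijective _ hbij _ (fun p => G p.1 p.2.1 p.2.2.1 p.2.2.2) fun v => rfl]
  simp only [Fintype.sum_prod_type]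

lemma Fintype.sum_comm_block_four {α M : Type*} [Fintype α] [AddCommMonoid M]
    (f : α → α → α → α → α → α → α → α → M) :
    ∑ a, ∑ b, ∑ c, ∑ d, ∑ p, ∑ q, ∑ r, ∑ t, f a b c d p q r t =
      ∑ p, ∑ q, ∑ r, ∑ t, ∑ a, ∑ b, ∑ c, ∑ d, f a b c d p q r t := by
  have inner : ∀ a b c d, ∑ p, ∑ q, ∑ r, ∑ t, f a b c d p q r t =
      ∑ w : Fin 4 → α, f a b c d (w 0) (w 1) (w 2) (w 3) := fun a b c d =>
    (Fintype.sum_fun_fin_four _).symm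
  have outer : ∀ p q r t, ∑ a, ∑ b, ∑ c, ∑ d, f a b c d p q r t =
      ∑ v : Fin 4 → α, f (v 0) (v 1) (v 2) (v 3) p q r t := fun p q r t =>
    (Fintype.sum_fun_fin_four _).symm
  simp only [inner, outer]
  rw [← Fintype.sum_fun_fin_four fun a b c d => ∑ w : Fin 4 → α, f a b c d (w 0) (w 1) (w 2) (w 3),
    ← Fintype.sum_fun_fin_four fun p q r t => ∑ v : Fin 4 → α, f (v 0) (v 1) (v 2) (v 3) p q r t]
  exact Finset.sum_comm

lemma eps4_eq_det_vandermonde (v : Fin 4 → Fin 4) :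
    eps4 (v 0) (v 1) (v 2) (v 3) = (vandermonde fun i => (v i : ℝ)).det / 12 := by
  have h0 : Finset.Ioi (0 : Fin 4) = {1, 2, 3} := by decide
  have h1 : Finset.Ioi (1 : Fin 4) = {2, 3} := by decide
  have h2 : Finset.Ioi (2 : Fin 4) = {3} := by decide
  have h3 : Finset.Ioi (3 : Fin 4) = ∅ := by decide
  rw [eps4, det_vandermonde, Fin.prod_univ_four, h0, h1, h2, h3]
  simp +decide only [Finset.prod_insert, Finset.mem_insert, Finset.mem_singleton,
    Finset.prod_singleton, Finset.prod_empty]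
  ring

lemma eps4_perm (σ : Perm (Fin 4)) : eps4 (σ 0) (σ 1) (σ 2) (σ 3) = Perm.sign σ := by
  have h12 : (vandermonde fun i : Fin 4 => (i : ℝ)).det = 12 := by
    have h := eps4_eq_det_vandermonde id
    norm_num [eps4] at h
    linarith
  have hσ : (vandermonde fun i => (σ i : ℝ)) =
      (vandermonde fun i : Fin 4 => (i : ℝ)).submatrix σ id := rfl
  rw [eps4_eq_det_vandermonde, hσ, det_permute, h12]
  ring

lemma eps4_eq_zero_of_not_injective {v : Fin 4 → Fin 4} (hv : ¬ Function.Injective v) :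
    eps4 (v 0) (v 1) (v 2) (v 3) = 0 := by
  obtain ⟨i, j, hij, hne⟩ := Function.not_injective_iff.mp hv
  rw [eps4_eq_det_vandermonde, det_vandermonde_eq_zero_iff.mpr ⟨i, j, by rw [hij], hne⟩, zero_div]

lemma sum_eps4_mul (F : Fin 4 → Fin 4 → Fin 4 → Fin 4 → ℝ) :
    ∑ I, ∑ J, ∑ K, ∑ L, eps4 I J K L * F I J K L =
      ∑ σ : Perm (Fin 4), (Perm.sign σ : ℝ) * F (σ 0) (σ 1) (σ 2) (σ 3) := by
  rw [← Fintype.sum_fun_fin_four]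
  symm
  refine Fintype.sum_of_injective (fun σ : Perm (Fin 4) => ⇑σ) DFunLike.coe_injective _ _
    (fun v hv => ?_) (fun σ => by rw [eps4_perm])
  rw [eps4_eq_zero_of_not_injective, zero_mul]
  exact fun hinj => hv ⟨Equiv.ofBijective v hinj.bijective_of_finite, rfl⟩

lemma sum_eps4_sq : ∑ μ, ∑ ν, ∑ ρ, ∑ τ, eps4 μ ν ρ τ * eps4 μ ν ρ τ = 24 := by
  rw [sum_eps4_mul]
  simp [eps4_perm, ← Int.cast_mul, ← Units.val_mul, Fintype.card_perm, Nat.factorial]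

lemma det_submatrix_eq_mul_eps4 (M : Matrix (Fin 4) (Fin 4) ℝ) (w : Fin 4 → Fin 4) :
    (M.submatrix id w).det = M.det * eps4 (w 0) (w 1) (w 2) (w 3) := by
  by_cases hw : Function.Injective w
  · let σ : Perm (Fin 4) := Equiv.ofBijective w hw.bijective_of_finite
    rw [show M.submatrix id w = M.submatrix id σ from rfl, det_permute', ← eps4_perm σ, mul_comm]
    rfl
  · obtain ⟨i, j, hij, hne⟩ := Function.not_injective_iff.mp hw
    rw [det_zero_of_column_eq hne fun k => by simp [hij], eps4_eq_zero_of_not_injective hw, mul_zero]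

lemma sum_eps4_mul_prod (M : Matrix (Fin 4) (Fin 4) ℝ) (a b c d : Fin 4) :
    ∑ I, ∑ J, ∑ K, ∑ L, eps4 I J K L * (M I a * M J b * M K c * M L d) =
      M.det * eps4 a b c d := by
  have h := det_submatrix_eq_mul_eps4 M ![a, b, c, d]
  rw [det_apply] at h
  rw [sum_eps4_mul]
  simpa [Fin.prod_univ_four, Units.smul_def] using h

lemma sum_eps4_mul_wedge_mul_wedge (M : Matrix (Fin 4) (Fin 4) ℝ) (a b c d : Fin 4) :
    ∑ I, ∑ J, ∑ K, ∑ L,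
      eps4 I J K L * (M I a * M J b - M I b * M J a) * (M K c * M L d - M K d * M L c) =
      4 * M.det * eps4 a b c d := by
  have expand : ∀ I J K L, eps4 I J K L * (M I a * M J b - M I b * M J a) *
      (M K c * M L d - M K d * M L c) =
      eps4 I J K L * (M I a * M J b * M K c * M L d) -
        eps4 I J K L * (M I b * M J a * M K c * M L d) -
        eps4 I J K L * (M I a * M J b * M K d * M L c) +
        eps4 I J K L * (M I b * M J a * M K d * M L c) := fun I J K L => by ring
  simp only [expand, Finset.sum_add_distrib, Finset.sum_sub_distrib, sum_eps4_mul_prod]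
  simp only [eps4]
  ring

def hodge (x : Fin 4 → Fin 4 → ℝ) : Fin 4 → Fin 4 → ℝ :=
  fun I J => 1 / 2 * ∑ K, ∑ L, eps4 I J K L * x K L

lemma precB_hodge_hodge (x y : Fin 4 → Fin 4 → ℝ) : precB (hodge x) (hodge y) = precB x y := by
  simp only [precB, hodge, Fin.sum_univ_four]
  norm_num [eps4]
  ring

lemma hodge_single (I J A B : Fin 4) : hodge (single I J 1) A B = 1 / 2 * eps4 I J A B := by
  simp [hodge, single_apply, ite_and]
  simp only [eps4]
  ring

lemma precB_single_single (I J K L : Fin 4) :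
    precB (single I J 1) (single K L 1) = 1 / 2 * eps4 I J K L := by
  simp [precB, single_apply, ite_and]

lemma sum_eps4_mul_eps4_mul_eps4 (I J K L : Fin 4) :
    ∑ A, ∑ B, ∑ C, ∑ D, eps4 I J A B * eps4 K L C D * eps4 A B C D = 4 * eps4 I J K L := by
  have h := precB_hodge_hodge (single I J 1) (single K L 1)
  rw [precB_single_single] at h
  simp only [precB, hodge_single] at h
  have regroup : ∀ A B C D, eps4 A B C D * (1 / 2 * eps4 I J A B) * (1 / 2 * eps4 K L C D) =
      1 / 4 * (eps4 I J A B * eps4 K L C D * eps4 A B C D) := fun A B C D => by ring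
  simp only [regroup, ← Finset.mul_sum] at h
  linarith

namespace BField

def secondForm (B : BField) (I J K L : Fin 4) : ℝ :=
  ∑ μ, ∑ ν, ∑ ρ, ∑ τ, eps4 μ ν ρ τ * B I J μ ν * B K L ρ τ

lemma secondForm_hodge (b : BField) (I J K L : Fin 4) :
    secondForm (fun I J μ ν => hodge (fun K L => b K L μ ν) I J) I J K L =
      1 / 4 * ∑ A, ∑ B, ∑ C, ∑ D, eps4 I J A B * eps4 K L C D * secondForm b A B C D := by
  have expand : ∀ μ ν ρ τ, eps4 μ ν ρ τ * hodge (fun K L => b K L μ ν) I J *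
      hodge (fun K L => b K L ρ τ) K L = ∑ A, ∑ B, ∑ C, ∑ D,
        1 / 4 * (eps4 I J A B * eps4 K L C D * (eps4 μ ν ρ τ * b A B μ ν * b C D ρ τ)) := by
    intro μ ν ρ τ
    rw [hodge, hodge, show ∀ x y z : ℝ, x * (1 / 2 * y) * (1 / 2 * z) = 1 / 4 * (x * (y * z)) from
      fun x y z => by ring]
    simp only [Finset.sum_mul]
    simp only [Finset.mul_sum]
    congr! 4
    ring
  simp only [secondForm, expand, Finset.mul_sum]
  rw [Fintype.sum_comm_block_four]

def topological (e : Matrix (Fin 4) (Fin 4) ℝ) (s : ℝ) : BField :=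
  fun I J μ ν => s * (e I μ * e J ν - e I ν * e J μ)

def gravitational (e : Matrix (Fin 4) (Fin 4) ℝ) (s : ℝ) : BField :=
  fun I J μ ν => hodge (fun K L => topological e s K L μ ν) I J

lemma gravitational_apply (e : Matrix (Fin 4) (Fin 4) ℝ) (s : ℝ) (I J μ ν : Fin 4) :
    gravitational e s I J μ ν =
      s / 2 * ∑ K, ∑ L, eps4 I J K L * (e K μ * e L ν - e K ν * e L μ) := by
  simp only [gravitational, hodge, topological, Finset.mul_sum]
  congr! 2
  ring

lemma precB_topological (e : Matrix (Fin 4) (Fin 4) ℝ) (s : ℝ) (μ ν ρ τ : Fin 4) :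
    precB (fun I J => topological e s I J μ ν) (fun I J => topological e s I J ρ τ) =
      2 * s ^ 2 * e.det * eps4 μ ν ρ τ := by
  have regroup : ∀ I J K L, eps4 I J K L * topological e s I J μ ν * topological e s K L ρ τ =
      s ^ 2 * (eps4 I J K L * (e I μ * e J ν - e I ν * e J μ) *
        (e K ρ * e L τ - e K τ * e L ρ)) := fun I J K L => by
    simp only [topological]; ring
  simp only [precB, regroup, ← Finset.mul_sum, sum_eps4_mul_wedge_mul_wedge]
  ring

lemma precB_gravitational (e : Matrix (Fin 4) (Fin 4) ℝ) (s : ℝ) (μ ν ρ τ : Fin 4) :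
    precB (fun I J => gravitational e s I J μ ν) (fun I J => gravitational e s I J ρ τ) =
      2 * s ^ 2 * e.det * eps4 μ ν ρ τ :=
  (precB_hodge_hodge _ _).trans (precB_topological e s μ ν ρ τ)

lemma secondForm_topological (e : Matrix (Fin 4) (Fin 4) ℝ) (s : ℝ) (I J K L : Fin 4) :
    secondForm (topological e s) I J K L = 4 * s ^ 2 * e.det * eps4 I J K L := by
  have h := sum_eps4_mul_wedge_mul_wedge eᵀ I J K L
  simp only [transpose_apply, det_transpose] at h
  have regroup : ∀ μ ν ρ τ, eps4 μ ν ρ τ * topological e s I J μ ν * topological e s K L ρ τ =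
      s ^ 2 * (eps4 μ ν ρ τ * (e I μ * e J ν - e J μ * e I ν) *
        (e K ρ * e L τ - e L ρ * e K τ)) := fun μ ν ρ τ => by
    simp only [topological]; ring
  simp only [secondForm, regroup, ← Finset.mul_sum, h]
  ring

lemma secondForm_gravitational (e : Matrix (Fin 4) (Fin 4) ℝ) (s : ℝ) (I J K L : Fin 4) :
    secondForm (gravitational e s) I J K L = 4 * s ^ 2 * e.det * eps4 I J K L := by
  have regroup : ∀ A B C D, eps4 I J A B * eps4 K L C D * secondForm (topological e s) A B C D =
      4 * s ^ 2 * e.det * (eps4 I J A B * eps4 K L C D * eps4 A B C D) := fun A B C D => by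
    rw [secondForm_topological]; ring
  unfold gravitational
  rw [secondForm_hodge]
  simp only [regroup, ← Finset.mul_sum, sum_eps4_mul_eps4_mul_eps4]
  ring

end BField

lemma vol4_eq_of_precB_eq (B : BField) (c : ℝ)
    (h : ∀ μ ν ρ τ, precB (fun I J => B I J μ ν) (fun I J => B I J ρ τ) = c * eps4 μ ν ρ τ) :
    vol4 B = 24 * c := by
  have regroup : ∀ μ ν ρ τ, eps4 μ ν ρ τ * (c * eps4 μ ν ρ τ) =
      c * (eps4 μ ν ρ τ * eps4 μ ν ρ τ) := fun μ ν ρ τ => by ring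
  simp only [vol4, h, regroup, ← Finset.mul_sum, sum_eps4_sq]
  ring

/-- For a cotetrad `e` and a sign `s`, both the topological-sector B-field
`s (e^I_μ e^J_ν − e^I_ν e^J_μ)` and the gravitational-sector B-field
`(s/2) ∑ ε^{IJKL} (e^K_μ e^L_ν − e^K_ν e^L_μ)` satisfy
(a) `≺B_{μν}, B_{ρσ}≻ = 2 (det e) ε_{μνρσ}`, hence the simplicity constraints
`≺B_{μν}, B_{ρσ}≻ = (𝒱/24) ε_{μνρσ}` with `𝒱 = 48 det e`, and `𝒱 ≠ 0` iff `e` is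
invertible; and (b) the second form of the simplicity constraints
`∑ ε^{μνρσ} B^{IJ}_{μν} B^{KL}_{ρσ} = 4 (det e) ε^{IJKL}`. -/
theorem simplicity_of_sector_BFields (e : Matrix (Fin 4) (Fin 4) ℝ)
    (s : ℝ) (hs : s = 1 ∨ s = -1) (B : BField)
    (hB : (∀ I J μ ν, B I J μ ν = s * (e I μ * e J ν - e I ν * e J μ)) ∨
          (∀ I J μ ν, B I J μ ν =
            (s / 2) * ∑ K : Fin 4, ∑ L : Fin 4,
              eps4 I J K L * (e K μ * e L ν - e K ν * e L μ))) :
    (∀ μ ν ρ τ : Fin 4,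
      precB (fun I J => B I J μ ν) (fun I J => B I J ρ τ) = 2 * e.det * eps4 μ ν ρ τ) ∧
    (∀ μ ν ρ τ : Fin 4,
      precB (fun I J => B I J μ ν) (fun I J => B I J ρ τ) = (vol4 B / 24) * eps4 μ ν ρ τ) ∧
    vol4 B = 48 * e.det ∧
    (vol4 B ≠ 0 ↔ IsUnit e) ∧
    (∀ I J K L : Fin 4,
      (∑ μ : Fin 4, ∑ ν : Fin 4, ∑ ρ : Fin 4, ∑ τ : Fin 4,
        eps4 μ ν ρ τ * B I J μ ν * B K L ρ τ) = 4 * e.det * eps4 I J K L) := by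
  have hs2 : s ^ 2 = 1 := by rcases hs with rfl | rfl <;> norm_num
  obtain ⟨hprecB, hsecond⟩ : (∀ μ ν ρ τ, precB (fun I J => B I J μ ν) (fun I J => B I J ρ τ) =
      2 * e.det * eps4 μ ν ρ τ) ∧ ∀ I J K L, B.secondForm I J K L = 4 * e.det * eps4 I J K L := by
    rcases hB with hB | hB
    · obtain rfl : B = BField.topological e s := by funext I J μ ν; exact hB I J μ ν
      exact ⟨fun μ ν ρ τ => by rw [BField.precB_topological, hs2, mul_one],
        fun I J K L => by rw [BField.secondForm_topological, hs2, mul_one]⟩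
    · obtain rfl : B = BField.gravitational e s := by
        funext I J μ ν; rw [hB, BField.gravitational_apply]
      exact ⟨fun μ ν ρ τ => by rw [BField.precB_gravitational, hs2, mul_one],
        fun I J K L => by rw [BField.secondForm_gravitational, hs2, mul_one]⟩
  have hvol : vol4 B = 48 * e.det := by rw [vol4_eq_of_precB_eq B _ hprecB]; ring
  refine ⟨hprecB, fun μ ν ρ τ => by rw [hprecB, hvol]; ring, hvol, ?_, hsecond⟩
  rw [hvol, isUnit_iff_isUnit_det, isUnit_iff_ne_zero]
  simp
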